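/- arXiv:1707.07856 — 4 statements merged into one kernel-verified Lean document; each statement's English description precedes it below -/
import Mathlib

section
/- If A is an n×n complex matrix and T₀ is a nonzero n×n complex matrix, then there exists a vector u and a complex number λ such that A u = λ u + u₁ for some vector u₁ with T₀ u ≠ 0 and T₀ u₁ = 0, where λ is an eigenvalue of A. (That is, among the generalized eigenvector chains of A one can find a vector u not annihilated by T₀ whose successor in the chain is annihilated by T₀.) -/
/-- For an `n × n` complex matrix `A` and a nonzero `n × n` complex matrix `T₀`, there
exist an eigenvalue `λ` of `A` and vectors `u`, `u₁` with `A u = λ u + u₁`,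
`T₀ u ≠ 0` and `T₀ u₁ = 0`. -/
theorem stmt0 (n : ℕ) (A T₀ : Matrix (Fin n) (Fin n) ℂ) (hT₀ : T₀ ≠ 0) :
    ∃ (lam : ℂ) (u u₁ : Fin n → ℂ), lam ∈ spectrum ℂ A ∧
      A.mulVec u = lam • u + u₁ ∧ T₀.mulVec u ≠ 0 ∧ T₀.mulVec u₁ = 0 := by
  set f : Module.End ℂ (Fin n → ℂ) := Matrix.toLinAlgEquiv' A with hf
  -- there is a generalized eigenvector not killed by T₀
  have htop : ⨆ μ : ℂ, f.maxGenEigenspace μ = ⊤ :=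
    Module.End.iSup_maxGenEigenspace_eq_top f
  have hker : ¬ (⊤ : Submodule ℂ (Fin n → ℂ)) ≤ LinearMap.ker T₀.mulVecLin := by
    intro h
    apply hT₀
    ext i j
    have := h (Submodule.mem_top (x := Pi.single j 1))
    rw [LinearMap.mem_ker] at this
    have := congrFun this i
    simpa [Matrix.mulVec_single] using this
  have : ∃ μ : ℂ, ¬ f.maxGenEigenspace μ ≤ LinearMap.ker T₀.mulVecLin := by
    by_contra h
    push_neg at h
    exact hker (htop ▸ iSup_le h)
  obtain ⟨μ, hμ⟩ := this
  obtain ⟨w, hw, hTw⟩ := Set.not_subset.mp hμ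
  simp only [SetLike.mem_coe, LinearMap.mem_ker, Matrix.mulVecLin_apply] at hTw
  rw [SetLike.mem_coe, Module.End.mem_maxGenEigenspace] at hw
  obtain ⟨m, hm⟩ := hw
  set g : Module.End ℂ (Fin n → ℂ) := f - μ • 1 with hg
  -- μ is an eigenvalue of f
  have hwne : w ≠ 0 := by rintro rfl; simp [Matrix.mulVecLin] at hTw
  have hev : Module.End.HasEigenvalue f μ := by
    apply Module.End.hasEigenvalue_of_hasGenEigenvalue (k := m)
    rw [Module.End.hasGenEigenvalue_iff, Submodule.ne_bot_iff]
    exact ⟨w, by rw [Module.End.mem_genEigenspace_nat, LinearMap.mem_ker]; exact hm, hwne⟩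
  have hspec : μ ∈ spectrum ℂ A := by
    have := Module.End.hasEigenvalue_iff_mem_spectrum.mp hev
    rwa [hf, AlgEquiv.spectrum_eq Matrix.toLinAlgEquiv' A] at this
  -- find the minimal j with T₀ ((g^j) w) = 0
  have hex : ∃ j : ℕ, T₀.mulVec ((g ^ j) w) = 0 := ⟨m, by rw [hm]; simp [Matrix.mulVec_zero]⟩
  classical
  set j := Nat.find hex with hj
  have hjspec : T₀.mulVec ((g ^ j) w) = 0 := Nat.find_spec hex
  have hjpos : j ≠ 0 := by
    intro h0
    rw [h0] at hjspec
    simp only [pow_zero, Module.End.one_apply] at hjspec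
    exact hTw hjspec
  obtain ⟨k, hk⟩ := Nat.exists_eq_succ_of_ne_zero hjpos
  have hkmin : T₀.mulVec ((g ^ k) w) ≠ 0 := Nat.find_min hex (by omega)
  refine ⟨μ, (g ^ k) w, (g ^ j) w, hspec, ?_, hkmin, hjspec⟩
  have hstep : (g ^ j) w = g ((g ^ k) w) := by
    rw [hk, pow_succ', Module.End.mul_apply]
  rw [hstep]
  have : f ((g ^ k) w) = g ((g ^ k) w) + μ • ((g ^ k) w) := by
    simp [hg, LinearMap.sub_apply]
  have hA : A.mulVec ((g ^ k) w) = f ((g ^ k) w) := by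
    rw [hf, Matrix.toLinAlgEquiv'_apply]
  rw [hA, this, add_comm]
end

section
/- Let U be an invertible n×n matrix over the field ℂ(x) of rational functions. Suppose U = T₁ S₁⁻¹ = T₂ S₂⁻¹ where T₁, T₂ have entries polynomial in x, S₁, S₂ have entries polynomial in x⁻¹, and all four matrices have determinants that are nonzero constants. Then there exists a constant invertible matrix L over ℂ with T₂ = T₁ L and S₂ = S₁ L. -/
open Polynomial

set_option maxHeartbeats 1000000


lemma const_of_poly_invpoly (p q : Polynomial ℂ)
    (h : algebraMap (Polynomial ℂ) (RatFunc ℂ) p = Polynomial.aeval (RatFunc.X : RatFunc ℂ)⁻¹ q) :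
    ∃ c : ℂ, p = Polynomial.C c := by
  by_cases hp : p = 0
  · exact ⟨0, by simp [hp]⟩
  set d := q.natDegree with hd
  have hX : (RatFunc.X : RatFunc ℂ) ≠ 0 := RatFunc.X_ne_zero
  set r : Polynomial ℂ := ∑ i ∈ Finset.range (d+1), Polynomial.C (q.coeff i) * Polynomial.X ^ (d - i) with hr
  have key : algebraMap (Polynomial ℂ) (RatFunc ℂ) (p * Polynomial.X ^ d)
      = algebraMap (Polynomial ℂ) (RatFunc ℂ) r := by
    rw [map_mul, h, hr, map_sum]
    conv_lhs => rw [q.as_sum_range' (d+1) (Nat.lt_succ_self d)]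
    rw [map_sum, Finset.sum_mul]
    refine Finset.sum_congr rfl fun i hi => ?_
    rw [Finset.mem_range, Nat.lt_succ_iff] at hi
    rw [Polynomial.aeval_monomial, map_mul, map_pow, map_pow, RatFunc.algebraMap_X,
      IsScalarTower.algebraMap_apply ℂ (Polynomial ℂ) (RatFunc ℂ), Polynomial.algebraMap_eq,
      inv_pow, pow_sub₀ _ hX hi]
    ring
  have hpr : p * Polynomial.X ^ d = r := RatFunc.algebraMap_injective ℂ key
  have hdegr : r.natDegree ≤ d := by
    refine (Polynomial.natDegree_sum_le _ _).trans ?_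
    simp only [Finset.fold_max_le]
    refine ⟨Nat.zero_le _, fun i hi => ?_⟩
    exact (Polynomial.natDegree_C_mul_le _ _).trans (by simp)
  have hdp : p.natDegree = 0 := by
    have := hpr ▸ hdegr
    rw [Polynomial.natDegree_mul hp (pow_ne_zero _ Polynomial.X_ne_zero),
      Polynomial.natDegree_pow, Polynomial.natDegree_X, mul_one] at this
    omega
  exact ⟨p.coeff 0, Polynomial.eq_C_of_natDegree_eq_zero hdp⟩

set_option synthInstance.maxHeartbeats 800000 in
/-- Uniqueness of the decomposition `U = T S⁻¹` with `T` polynomial in `x`, `S`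
polynomial in `x⁻¹`, both with nonzero constant determinants: two such decompositions
differ by a constant invertible matrix `L`. -/
theorem stmt6 (n : ℕ) (U T₁ T₂ S₁ S₂ : Matrix (Fin n) (Fin n) (RatFunc ℂ))
    (hT₁ : ∀ i j, ∃ p : Polynomial ℂ, T₁ i j = algebraMap (Polynomial ℂ) (RatFunc ℂ) p)
    (hT₂ : ∀ i j, ∃ p : Polynomial ℂ, T₂ i j = algebraMap (Polynomial ℂ) (RatFunc ℂ) p)
    (hS₁ : ∀ i j, ∃ p : Polynomial ℂ, S₁ i j = Polynomial.aeval (RatFunc.X : RatFunc ℂ)⁻¹ p)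
    (hS₂ : ∀ i j, ∃ p : Polynomial ℂ, S₂ i j = Polynomial.aeval (RatFunc.X : RatFunc ℂ)⁻¹ p)
    (hdT₁ : ∃ c : ℂ, c ≠ 0 ∧ T₁.det = algebraMap ℂ (RatFunc ℂ) c)
    (hdT₂ : ∃ c : ℂ, c ≠ 0 ∧ T₂.det = algebraMap ℂ (RatFunc ℂ) c)
    (hdS₁ : ∃ c : ℂ, c ≠ 0 ∧ S₁.det = algebraMap ℂ (RatFunc ℂ) c)
    (hdS₂ : ∃ c : ℂ, c ≠ 0 ∧ S₂.det = algebraMap ℂ (RatFunc ℂ) c)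
    (hU₁ : U = T₁ * S₁⁻¹) (hU₂ : U = T₂ * S₂⁻¹) :
    ∃ L : Matrix (Fin n) (Fin n) ℂ, IsUnit L.det ∧
      T₂ = T₁ * L.map (algebraMap ℂ (RatFunc ℂ)) ∧
      S₂ = S₁ * L.map (algebraMap ℂ (RatFunc ℂ)) := by
  classical
  obtain ⟨c₁, hc₁, hdc₁⟩ := hdT₁
  obtain ⟨c₂, hc₂, hdc₂⟩ := hdT₂
  obtain ⟨e₁, he₁, hde₁⟩ := hdS₁
  obtain ⟨e₂, he₂, hde₂⟩ := hdS₂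
  set f := algebraMap (Polynomial ℂ) (RatFunc ℂ) with hf
  set g := (Polynomial.aeval (RatFunc.X : RatFunc ℂ)⁻¹ : Polynomial ℂ →ₐ[ℂ] RatFunc ℂ).toRingHom with hg
  -- matrices over the two rings
  choose P₁ hP₁ using hT₁
  choose P₂ hP₂ using hT₂
  choose Q₁ hQ₁ using hS₁
  choose Q₂ hQ₂ using hS₂
  have hT1m : T₁ = (Matrix.of P₁).map f := by ext i j; simp [Matrix.map_apply, hP₁]
  have hT2m : T₂ = (Matrix.of P₂).map f := by ext i j; simp [Matrix.map_apply, hP₂]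
  have hS1m : S₁ = (Matrix.of Q₁).map g := by ext i j; simp [Matrix.map_apply, hQ₁, hg]
  have hS2m : S₂ = (Matrix.of Q₂).map g := by ext i j; simp [Matrix.map_apply, hQ₂, hg]
  -- units
  have uT₁ : IsUnit T₁.det := hdc₁ ▸ (hc₁.isUnit.map (algebraMap ℂ (RatFunc ℂ)))
  have uT₂ : IsUnit T₂.det := hdc₂ ▸ (hc₂.isUnit.map (algebraMap ℂ (RatFunc ℂ)))
  have uS₁ : IsUnit S₁.det := hde₁ ▸ (he₁.isUnit.map (algebraMap ℂ (RatFunc ℂ)))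
  have uS₂ : IsUnit S₂.det := hde₂ ▸ (he₂.isUnit.map (algebraMap ℂ (RatFunc ℂ)))
  have hUU : T₁ * S₁⁻¹ = T₂ * S₂⁻¹ := hU₁ ▸ hU₂
  set M := T₁⁻¹ * T₂ with hM
  have hMS : M = S₁⁻¹ * S₂ := by
    have h1 : T₂ = T₁ * (S₁⁻¹ * S₂) := by
      rw [← Matrix.mul_assoc, hUU, Matrix.mul_assoc, Matrix.nonsing_inv_mul _ uS₂,
        Matrix.mul_one]
    rw [hM, h1, Matrix.nonsing_inv_mul_cancel_left _ _ uT₁]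
  have hadjP : ((Matrix.of P₁).map ⇑f).adjugate = ((Matrix.of P₁).adjugate).map ⇑f := by
    simpa [RingHom.mapMatrix_apply] using (f.map_adjugate (Matrix.of P₁)).symm
  have hadjQ : ((Matrix.of Q₁).map ⇑g).adjugate = ((Matrix.of Q₁).adjugate).map ⇑g := by
    simpa [RingHom.mapMatrix_apply] using (g.map_adjugate (Matrix.of Q₁)).symm
  -- entries of M are polynomial in X
  have hMT : ∀ i j, ∃ p : Polynomial ℂ, M i j = f p := by
    intro i j
    have : M = (algebraMap ℂ (RatFunc ℂ) c₁)⁻¹ • (((Matrix.of P₁).adjugate * Matrix.of P₂).map f : Matrix (Fin n) (Fin n) (RatFunc ℂ)) := by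
      rw [hM, Matrix.inv_def, hdc₁, Matrix.smul_mul, hT1m, hT2m, hadjP, ← Matrix.map_mul]
      congr 1
      simp only [Ring.inverse_eq_inv']
    have hCc : f (Polynomial.C c₁⁻¹) = (algebraMap ℂ (RatFunc ℂ) c₁)⁻¹ := by
      rw [hf, ← Polynomial.algebraMap_eq, ← IsScalarTower.algebraMap_apply, map_inv₀]
    refine ⟨Polynomial.C c₁⁻¹ * ((Matrix.of P₁).adjugate * Matrix.of P₂) i j, ?_⟩
    rw [this, Matrix.smul_apply, Matrix.map_apply, smul_eq_mul, map_mul, hCc]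
  have hMS' : ∀ i j, ∃ p : Polynomial ℂ, M i j = g p := by
    intro i j
    have : M = (algebraMap ℂ (RatFunc ℂ) e₁)⁻¹ • (((Matrix.of Q₁).adjugate * Matrix.of Q₂).map g : Matrix (Fin n) (Fin n) (RatFunc ℂ)) := by
      rw [hMS, Matrix.inv_def, hde₁, Matrix.smul_mul, hS1m, hS2m, hadjQ, ← Matrix.map_mul]
      congr 1
      simp only [Ring.inverse_eq_inv']
    have hCe : g (Polynomial.C e₁⁻¹) = (algebraMap ℂ (RatFunc ℂ) e₁)⁻¹ := by
      rw [hg]; simp only [AlgHom.toRingHom_eq_coe, RingHom.coe_coe, Polynomial.aeval_C, map_inv₀]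
    refine ⟨Polynomial.C e₁⁻¹ * ((Matrix.of Q₁).adjugate * Matrix.of Q₂) i j, ?_⟩
    rw [this, Matrix.smul_apply, Matrix.map_apply, smul_eq_mul, map_mul, hCe]
  -- each entry is constant
  have hconst : ∀ i j, ∃ c : ℂ, M i j = algebraMap ℂ (RatFunc ℂ) c := by
    intro i j
    obtain ⟨p, hp⟩ := hMT i j
    obtain ⟨q, hq⟩ := hMS' i j
    obtain ⟨c, hc⟩ := const_of_poly_invpoly p q (by rw [← hp, hq]; rfl)
    refine ⟨c, ?_⟩
    rw [hp, hc, hf, IsScalarTower.algebraMap_apply ℂ (Polynomial ℂ) (RatFunc ℂ),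
      Polynomial.algebraMap_eq]
  choose L hL using hconst
  have hMmap : M = (Matrix.of L).map (algebraMap ℂ (RatFunc ℂ)) := by
    ext i j; simp [Matrix.map_apply, hL]
  refine ⟨Matrix.of L, ?_, ?_, ?_⟩
  · rw [isUnit_iff_ne_zero]
    intro h0
    have : M.det = 0 := by
      rw [hMmap, ← RingHom.mapMatrix_apply, ← RingHom.map_det, h0, map_zero]
    rw [hM, Matrix.det_mul, Matrix.det_nonsing_inv, hdc₁, hdc₂,
      Ring.inverse_eq_inv'] at this
    simp only [mul_eq_zero, inv_eq_zero] at this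
    rcases this with h | h
    · exact hc₁ ((_root_.map_eq_zero _).mp h)
    · exact hc₂ ((_root_.map_eq_zero _).mp h)
  · rw [← hMmap, hM, Matrix.mul_nonsing_inv_cancel_left _ _ uT₁]
  · rw [← hMmap, hMS, Matrix.mul_nonsing_inv_cancel_left _ _ uS₁]
end

section
/- Let p, q ∈ ℂ[y] be coprime polynomials, not both constant, and suppose that for four distinct points [α_i : β_i] (i = 1,…,4) in ℙ¹(ℂ), each of the polynomials β_i p - α_i q is the square of a polynomial. Then no such pair (p, q) exists; i.e., at most three distinct linear combinations β p - α q (with [α:β] distinct points of ℙ¹) can be perfect squares in ℂ[y] when max(deg p, deg q) ≥ 1. -/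
open Polynomial

lemma coprime_lin {f g : Polynomial ℂ} (h : IsCoprime f g) (a b c d : ℂ)
    (hdet : a * d - b * c ≠ 0) :
    IsCoprime (C a * f + C b * g) (C c * f + C d * g) := by
  obtain ⟨u, v, huv⟩ := h
  refine ⟨C (a*d-b*c)⁻¹ * (C d * u - C c * v),
          C (a*d-b*c)⁻¹ * (- (C b) * u + C a * v), ?_⟩
  have h1 : (C (a*d-b*c)⁻¹ : Polynomial ℂ) * (C a * C d - C b * C c) = 1 := by
    rw [← C_mul, ← C_mul, ← C_sub, ← C_mul, inv_mul_cancel₀ hdet, C_1]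
  linear_combination (C (a*d-b*c)⁻¹ * (C a * C d - C b * C c)) * huv + h1

lemma sq_of_coprime' {a b r : Polynomial ℂ} (h : IsCoprime a b) (heq : a * b = r ^ 2) :
    ∃ s : Polynomial ℂ, a = s ^ 2 := by
  obtain ⟨d, u, hu⟩ := exists_associated_pow_of_mul_eq_pow' h heq
  obtain ⟨c, hc, hcu⟩ := Polynomial.isUnit_iff.mp u.isUnit
  obtain ⟨w, hw⟩ := IsAlgClosed.exists_pow_nat_eq c two_pos
  exact ⟨C w * d, by rw [← hu, ← hcu, mul_pow, ← C_pow, hw]; ring⟩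

lemma step {r0 r1 rk : Polynomial ℂ} (hcop : IsCoprime r0 r1) {lam mu : ℂ}
    (hlam : lam ≠ 0) (hmu : mu ≠ 0)
    (hk : rk ^ 2 = C lam * r0 ^ 2 - C mu * r1 ^ 2) :
    ∃ s t : ℂ, ∃ u v : Polynomial ℂ, s ^ 2 = lam ∧ t ^ 2 = mu ∧
      C s * r0 - C t * r1 = u ^ 2 ∧ C s * r0 + C t * r1 = v ^ 2 := by
  obtain ⟨s, hs⟩ := IsAlgClosed.exists_pow_nat_eq lam two_pos
  obtain ⟨t, ht⟩ := IsAlgClosed.exists_pow_nat_eq mu two_pos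
  have hs0 : s ≠ 0 := fun h => hlam (by rw [← hs, h]; ring)
  have ht0 : t ≠ 0 := fun h => hmu (by rw [← ht, h]; ring)
  have hfac : (C s * r0 - C t * r1) * (C s * r0 + C t * r1) = rk ^ 2 := by
    rw [hk]
    have h1 : (C s : Polynomial ℂ) ^ 2 = C lam := by rw [← C_pow, hs]
    have h2 : (C t : Polynomial ℂ) ^ 2 = C mu := by rw [← C_pow, ht]
    linear_combination (r0 ^ 2) * h1 - (r1 ^ 2) * h2
  have hcopF : IsCoprime (C s * r0 - C t * r1) (C s * r0 + C t * r1) := by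
    have hdet : s * t - (-t) * s ≠ 0 := by
      have : s * t - (-t) * s = 2 * (s * t) := by ring
      rw [this]
      exact mul_ne_zero two_ne_zero (mul_ne_zero hs0 ht0)
    have := coprime_lin hcop s (-t) s t hdet
    simpa [map_neg, neg_mul, ← sub_eq_add_neg] using this
  obtain ⟨u, hu⟩ := sq_of_coprime' hcopF hfac
  obtain ⟨v, hv⟩ := sq_of_coprime' hcopF.symm (by rwa [mul_comm] at hfac)
  exact ⟨s, t, u, v, hs, ht, hu, hv⟩

lemma descent (d : ℕ) : ∀ p q : Polynomial ℂ, IsCoprime p q →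
    max p.natDegree q.natDegree = d → 1 ≤ d →
    ∀ α β : Fin 4 → ℂ,
    (∀ i j : Fin 4, i ≠ j → α i * β j ≠ α j * β i) →
    (∀ i, ∃ r : Polynomial ℂ, C (β i) * p - C (α i) * q = r ^ 2) →
    False := by
  induction d using Nat.strong_induction_on with
  | _ d IH =>
  intro p q hpq hd hd1 α β hdist hsq
  obtain ⟨r0, hr0⟩ := hsq 0
  obtain ⟨r1, hr1⟩ := hsq 1
  obtain ⟨r2, hr2⟩ := hsq 2
  obtain ⟨r3, hr3⟩ := hsq 3
  set δ := α 1 * β 0 - α 0 * β 1 with hδdef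
  have hδ : δ ≠ 0 := sub_ne_zero.mpr (hdist 1 0 (by decide))
  -- coprimality of r0, r1
  have hcop01 : IsCoprime (r0 ^ 2) (r1 ^ 2) := by
    have hdet : β 0 * (-(α 1)) - (-(α 0)) * β 1 ≠ 0 := by
      intro h; apply hδ; linear_combination -h
    have := coprime_lin hpq (β 0) (-(α 0)) (β 1) (-(α 1)) hdet
    simp only [map_neg, neg_mul, ← sub_eq_add_neg] at this
    rwa [hr0, hr1] at this
  have hr01 : IsCoprime r0 r1 := (IsCoprime.pow_iff two_pos two_pos).mp hcop01
  -- C δ * p and C δ * q in terms of r0^2, r1^2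
  have hCδ : (C δ : Polynomial ℂ) = C (α 1) * C (β 0) - C (α 0) * C (β 1) := by
    rw [← C_mul, ← C_mul, ← C_sub]
  have hp : C δ * p = C (α 1) * r0 ^ 2 - C (α 0) * r1 ^ 2 := by
    rw [← hr0, ← hr1]; linear_combination p * hCδ
  have hq : C δ * q = C (β 1) * r0 ^ 2 - C (β 0) * r1 ^ 2 := by
    rw [← hr0, ← hr1]; linear_combination q * hCδ
  -- degree bookkeeping
  have hub : ∀ i, ∀ r : Polynomial ℂ, C (β i) * p - C (α i) * q = r ^ 2 →
      (r ^ 2).natDegree ≤ d := by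
    intro i r hr
    rw [← hr]
    calc (C (β i) * p - C (α i) * q).natDegree
        ≤ max (C (β i) * p).natDegree (C (α i) * q).natDegree := natDegree_sub_le _ _
      _ ≤ max p.natDegree q.natDegree :=
          max_le_max (natDegree_C_mul_le _ _) (natDegree_C_mul_le _ _)
      _ = d := hd
  have hub0 := hub 0 r0 hr0
  have hub1 := hub 1 r1 hr1
  have hlbp : p.natDegree ≤ max (r0 ^ 2).natDegree (r1 ^ 2).natDegree := by
    have h1 : p.natDegree = (C δ * p).natDegree := (natDegree_C_mul hδ).symm
    rw [h1, hp]
    calc (C (α 1) * r0 ^ 2 - C (α 0) * r1 ^ 2).natDegree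
        ≤ max (C (α 1) * r0 ^ 2).natDegree (C (α 0) * r1 ^ 2).natDegree :=
          natDegree_sub_le _ _
      _ ≤ max (r0 ^ 2).natDegree (r1 ^ 2).natDegree :=
          max_le_max (natDegree_C_mul_le _ _) (natDegree_C_mul_le _ _)
  have hlbq : q.natDegree ≤ max (r0 ^ 2).natDegree (r1 ^ 2).natDegree := by
    have h1 : q.natDegree = (C δ * q).natDegree := (natDegree_C_mul hδ).symm
    rw [h1, hq]
    calc (C (β 1) * r0 ^ 2 - C (β 0) * r1 ^ 2).natDegree
        ≤ max (C (β 1) * r0 ^ 2).natDegree (C (β 0) * r1 ^ 2).natDegree :=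
          natDegree_sub_le _ _
      _ ≤ max (r0 ^ 2).natDegree (r1 ^ 2).natDegree :=
          max_le_max (natDegree_C_mul_le _ _) (natDegree_C_mul_le _ _)
  have hpow0 : (r0 ^ 2).natDegree = 2 * r0.natDegree := natDegree_pow r0 2
  have hpow1 : (r1 ^ 2).natDegree = 2 * r1.natDegree := natDegree_pow r1 2
  set d' := max r0.natDegree r1.natDegree with hd'def
  have hd'lt : d' < d := by
    rw [hpow0] at hub0 hlbp hlbq
    rw [hpow1] at hub1 hlbp hlbq
    have := hd ▸ max_le hlbp hlbq
    omega
  have hd'1 : 1 ≤ d' := by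
    rw [hpow0] at hub0 hlbp hlbq
    rw [hpow1] at hub1 hlbp hlbq
    have := hd ▸ max_le hlbp hlbq
    omega
  -- expressing r2^2 and r3^2 as combinations of r0^2, r1^2
  have hcomb : ∀ k : Fin 4, ∀ rk : Polynomial ℂ, C (β k) * p - C (α k) * q = rk ^ 2 →
      rk ^ 2 = C (δ⁻¹ * (α 1 * β k - α k * β 1)) * r0 ^ 2
             - C (δ⁻¹ * (α 0 * β k - α k * β 0)) * r1 ^ 2 := by
    intro k rk hrk
    have e1 : (C δ : Polynomial ℂ) * C (δ⁻¹ * (α 1 * β k - α k * β 1))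
        = C (α 1) * C (β k) - C (α k) * C (β 1) := by
      rw [← C_mul, ← C_mul, ← C_mul, ← C_sub]
      congr 1
      field_simp
    have e2 : (C δ : Polynomial ℂ) * C (δ⁻¹ * (α 0 * β k - α k * β 0))
        = C (α 0) * C (β k) - C (α k) * C (β 0) := by
      rw [← C_mul, ← C_mul, ← C_mul, ← C_sub]
      congr 1
      field_simp
    apply mul_left_cancel₀ (show (C δ : Polynomial ℂ) ≠ 0 from fun h => hδ (by
      simpa using h))
    rw [← hrk]
    linear_combination C (β k) * hp - C (α k) * hq - (r0 ^ 2) * e1 + (r1 ^ 2) * e2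
  have hmk : ∀ k : Fin 4, k ≠ 0 → k ≠ 1 →
      δ⁻¹ * (α 1 * β k - α k * β 1) ≠ 0 ∧ δ⁻¹ * (α 0 * β k - α k * β 0) ≠ 0 := by
    intro k hk0 hk1
    constructor
    · exact mul_ne_zero (inv_ne_zero hδ)
        (sub_ne_zero.mpr (hdist 1 k (Ne.symm hk1)))
    · exact mul_ne_zero (inv_ne_zero hδ)
        (sub_ne_zero.mpr (hdist 0 k (Ne.symm hk0)))
  obtain ⟨hlam2, hmu2⟩ := hmk 2 (by decide) (by decide)
  obtain ⟨hlam3, hmu3⟩ := hmk 3 (by decide) (by decide)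
  obtain ⟨s, t, u, v, hs, ht, hu, hv⟩ := step hr01 hlam2 hmu2 (hcomb 2 r2 hr2)
  obtain ⟨s', t', w, z, hs', ht', hw, hz⟩ := step hr01 hlam3 hmu3 (hcomb 3 r3 hr3)
  -- nonvanishing
  have hs0 : s ≠ 0 := fun h => hlam2 (by rw [← hs, h]; ring)
  have ht0 : t ≠ 0 := fun h => hmu2 (by rw [← ht, h]; ring)
  have hs'0 : s' ≠ 0 := fun h => hlam3 (by rw [← hs', h]; ring)
  have ht'0 : t' ≠ 0 := fun h => hmu3 (by rw [← ht', h]; ring)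
  -- Plücker: μ₂ λ₃ ≠ μ₃ λ₂
  have hPlk : (δ⁻¹ * (α 0 * β 2 - α 2 * β 0)) * (δ⁻¹ * (α 1 * β 3 - α 3 * β 1))
      ≠ (δ⁻¹ * (α 0 * β 3 - α 3 * β 0)) * (δ⁻¹ * (α 1 * β 2 - α 2 * β 1)) := by
    intro h
    have key : (δ⁻¹ * (α 0 * β 2 - α 2 * β 0)) * (δ⁻¹ * (α 1 * β 3 - α 3 * β 1))
        - (δ⁻¹ * (α 0 * β 3 - α 3 * β 0)) * (δ⁻¹ * (α 1 * β 2 - α 2 * β 1))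
        = -δ⁻¹ * (α 2 * β 3 - α 3 * β 2) := by
      field_simp
      ring
    have hz2 : -δ⁻¹ * (α 2 * β 3 - α 3 * β 2) ≠ 0 :=
      mul_ne_zero (neg_ne_zero.mpr (inv_ne_zero hδ))
        (sub_ne_zero.mpr (hdist 2 3 (by decide)))
    exact hz2 (by rw [← key, h]; ring)
  have hX : (t * s') ^ 2 ≠ (t' * s) ^ 2 := by
    rw [mul_pow, mul_pow, ht, hs', ht', hs]
    exact hPlk
  -- the new four points
  have h1 : t * s' ≠ t' * s := fun h => hX (by rw [h])
  have h2 : t * s' ≠ -(t' * s) := fun h => hX (by rw [h]; ring)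
  have hts : t * s ≠ 0 := mul_ne_zero ht0 hs0
  have hts' : t' * s' ≠ 0 := mul_ne_zero ht'0 hs'0
  apply IH d' hd'lt r0 r1 hr01 rfl hd'1 ![-t, t, -t', t'] ![s, s, s', s']
  · intro i j hij
    fin_cases i <;> fin_cases j <;>
      simp only [Nat.succ_eq_add_one, Nat.reduceAdd, Fin.reduceFinMk, Fin.isValue,
        Matrix.cons_val_zero, Matrix.cons_val_one, Matrix.head_cons,
        Matrix.cons_val_two, Matrix.tail_cons, Matrix.cons_val_three] <;>
      first
      | exact absurd rfl hij
      | (intro h; first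
          | exact hts (by linear_combination -h/2)
          | exact hts (by linear_combination h/2)
          | exact hts' (by linear_combination -h/2)
          | exact hts' (by linear_combination h/2)
          | exact h1 (by linear_combination -h)
          | exact h1 (by linear_combination h)
          | exact h2 (by linear_combination -h)
          | exact h2 (by linear_combination h))
  · intro i
    fin_cases i <;>
      simp only [Nat.succ_eq_add_one, Nat.reduceAdd, Fin.reduceFinMk, Fin.isValue,
        Matrix.cons_val_zero, Matrix.cons_val_one, Matrix.head_cons,
        Matrix.cons_val_two, Matrix.tail_cons, Matrix.cons_val_three]
    · exact ⟨v, by rw [map_neg, neg_mul, sub_neg_eq_add]; exact hv⟩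
    · exact ⟨u, hu⟩
    · exact ⟨z, by rw [map_neg, neg_mul, sub_neg_eq_add]; exact hz⟩
    · exact ⟨w, hw⟩

/-- Mason–Stothers-type statement: for coprime `p, q ∈ ℂ[y]`, not both constant, there
cannot be four pairwise distinct points `[α_i : β_i]` of `ℙ¹(ℂ)` such that each
`β_i p - α_i q` is a perfect square in `ℂ[y]`. -/
theorem stmt8 (p q : Polynomial ℂ) (hpq : IsCoprime p q)
    (hdeg : 1 ≤ max p.natDegree q.natDegree)
    (α β : Fin 4 → ℂ) (hne : ∀ i, (α i, β i) ≠ (0, 0))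
    (hdist : ∀ i j : Fin 4, i ≠ j → α i * β j ≠ α j * β i)
    (hsq : ∀ i, ∃ r : Polynomial ℂ, C (β i) * p - C (α i) * q = r ^ 2) :
    False := by
  exact descent (max p.natDegree q.natDegree) p q hpq rfl hdeg α β hdist hsq
end

section
/- For the 2×2 matrix U(x) = [[x, x-1],[0, 1/x]], there do not exist matrices T(x) with entries in ℂ[x] and S(z) with entries in ℂ[z] such that det T and det S are nonzero constants and U(x) = T(x)·S(1/x)⁻¹ for all x ≠ 0. -/
open Polynomial

/-
The second row of `U(x)` is `(0, x⁻¹)`, so the second row of `U(x)·S(1/x) = T(x)` says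
`T₁ⱼ(x) = x⁻¹ S₁ⱼ(x⁻¹)` for `x ≠ 0`. Multiplying by `x ^ (deg S₁ⱼ + 1)` turns this into the
polynomial identity `X ^ (deg S₁ⱼ + 1) * T₁ⱼ = reverse S₁ⱼ`, whose constant term shows that the
leading coefficient of `S₁ⱼ` vanishes. Hence the second row of `S` is zero and `det S = 0`.
-/

namespace Polynomial

variable {K : Type*} [Field K]

theorem eval_reverse_inv_mul_pow_natDegree (q : K[X]) {x : K} (hx : x ≠ 0) :
    q.reverse.eval x⁻¹ * x ^ q.natDegree = q.eval x := by
  have : Invertible x := invertibleOfNonzero hx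
  simpa [eval₂_eq_eval_map] using eval₂_reverse_mul_pow (RingHom.id K) x q

theorem eq_zero_of_eval_eq_inv_mul_eval_inv [Infinite K] (p q : K[X])
    (h : ∀ x : K, x ≠ 0 → p.eval x = x⁻¹ * q.eval x⁻¹) : q = 0 := by
  have hreverse : X ^ (q.natDegree + 1) * p = q.reverse := by
    refine eq_of_infinite_eval_eq _ _ ((Set.finite_singleton 0).infinite_compl.mono ?_)
    intro x (hx : x ≠ 0)
    rw [Set.mem_ofPred_eq, eval_mul, eval_pow, eval_X, h x hx,
      ← eval_reverse_inv_mul_pow_natDegree q (inv_ne_zero hx), inv_inv,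
      inv_pow, pow_succ]
    field_simp
  rw [← leadingCoeff_eq_zero, ← coeff_zero_reverse, ← hreverse, pow_succ', mul_assoc,
    mul_coeff_zero, coeff_X_zero, zero_mul]

end Polynomial

/-- Example 2 of the paper: for `U(x) = [[x, x-1],[0, 1/x]]` there is no Birkhoff
decomposition `U(x) = T(x)·S(1/x)⁻¹` with `T`, `S` polynomial matrices whose
determinants are nonzero constants (equivalently, `U(x)·S(1/x) = T(x)` for all
`x ≠ 0`). -/
theorem stmt19 :
    ¬ ∃ T S : Matrix (Fin 2) (Fin 2) (Polynomial ℂ),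
      (∃ c : ℂ, c ≠ 0 ∧ T.det = C c) ∧ (∃ c : ℂ, c ≠ 0 ∧ S.det = C c) ∧
      ∀ x : ℂ, x ≠ 0 →
        (!![x, x - 1; 0, x⁻¹] : Matrix (Fin 2) (Fin 2) ℂ) * S.map (fun p => p.eval x⁻¹) =
          T.map (fun p => p.eval x) := by
  rintro ⟨T, S, -, ⟨c, hc, hdetS⟩, h⟩
  have hrow : ∀ j, S 1 j = 0 := fun j =>
    eq_zero_of_eval_eq_inv_mul_eval_inv (T 1 j) (S 1 j) fun x hx => by
      simpa [Matrix.mul_apply, Fin.sum_univ_two] using (congrFun₂ (h x hx) 1 j).symm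
  have hdet : S.det = 0 := Matrix.det_eq_zero_of_row_eq_zero 1 hrow
  rw [hdetS, C_eq_zero] at hdet
  exact hc hdet
end
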